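/- Let $u_0\in C^1(\mathbb{R}^n)$ be Lipschitz continuous and suppose there exist $K>0$ and $\delta\in(0,1)$ such that $|u_0(x)-Du_0(x)\cdot x|\le K(1+|x|)^{1-\delta}$ for all $x\in\mathbb{R}^n$. Then: (i) for all $0<r_1<r_2\le1$ and all $x\in\mathbb{R}^n$, $\big|r_2\,u_0(x/r_2)-r_1\,u_0(x/r_1)\big|\le\tfrac{K}{\delta}(1+|x|)^{1-\delta}(r_2^{\delta}-r_1^{\delta})$; (ii) the limit $\bar u_0(x):=\lim_{r\to0^+}r\,u_0(x/r)$ exists locally uniformly in $x$, is Lipschitz continuous and positively $1$-homogeneous; (iii) $|u_0(x)-\bar u_0(x)|\le\tfrac{K}{\delta}(1+|x|)^{1-\delta}$ for all $x\in\mathbb{R}^n$. -/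

import Mathlib

open MeasureTheory Filter Metric Set
open scoped Topology NNReal RealInnerProductSpace

noncomputable section

/-- `ℝⁿ` with the Euclidean norm. -/
abbrev Euc (n : ℕ) : Type := EuclideanSpace ℝ (Fin n)

/-- `G_s(r) = ∫_0^r (1+w²)^{-(n+1+s)/2} dw`. -/
def Gfun (n : ℕ) (s r : ℝ) : ℝ :=
  ∫ w in (0:ℝ)..r, (1 + w ^ 2) ^ (-((n : ℝ) + 1 + s) / 2)

/-- Fractional mean curvature of the subgraph of `u` at the point `(x, u x)`:
`H_s((x,u(x)),E) = -∫ [G_s((u(x+z)-u(x))/|z|) + G_s((u(x-z)-u(x))/|z|)] |z|^{-(n+s)} dz`. -/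
def Hgraph (n : ℕ) (s : ℝ) (u : Euc n → ℝ) (x : Euc n) : ℝ :=
  -∫ z : Euc n,
      (Gfun n s ((u (x + z) - u x) / ‖z‖) + Gfun n s ((u (x - z) - u x) / ‖z‖))
        / ‖z‖ ^ ((n : ℝ) + s)

/-- The (GF) operator `φ_t + √(1+|Dφ|²) · H_s` applied to a function `φ` at `(x, t)`. -/
def gfOp (n : ℕ) (s : ℝ) (φ : Euc n → ℝ → ℝ) (x : Euc n) (t : ℝ) : ℝ :=
  deriv (fun τ => φ x τ) t
    + Real.sqrt (1 + ‖gradient (fun y => φ y t) x‖ ^ 2)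
        * Hgraph n s (fun y => φ y t) x

/-- Viscosity subsolution of (GF) for times in the set `I`. -/
def IsGFSubsolOn (n : ℕ) (s : ℝ) (v : Euc n → ℝ → ℝ) (I : Set ℝ) : Prop :=
  ∀ φ : Euc n → ℝ → ℝ,
    ContDiff ℝ (⊤ : ℕ∞) (fun p : Euc n × ℝ => φ p.1 p.2) →
    ∀ x t, t ∈ I → (∀ y, ∀ r ∈ I, v y r ≤ φ y r) → v x t = φ x t →
      gfOp n s φ x t ≤ 0

/-- Viscosity supersolution of (GF) for times in the set `I`. -/
def IsGFSupersolOn (n : ℕ) (s : ℝ) (v : Euc n → ℝ → ℝ) (I : Set ℝ) : Prop :=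
  ∀ φ : Euc n → ℝ → ℝ,
    ContDiff ℝ (⊤ : ℕ∞) (fun p : Euc n × ℝ => φ p.1 p.2) →
    ∀ x t, t ∈ I → (∀ y, ∀ r ∈ I, φ y r ≤ v y r) → v x t = φ x t →
      0 ≤ gfOp n s φ x t

/-- Viscosity solution of (GF) for times in the set `I`. -/
def IsGFSolOn (n : ℕ) (s : ℝ) (v : Euc n → ℝ → ℝ) (I : Set ℝ) : Prop :=
  IsGFSubsolOn n s v I ∧ IsGFSupersolOn n s v I

/-- Viscosity solution of (GF) on `ℝⁿ × [0,∞)` with initial datum `u₀`. -/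
def IsGFSolution (n : ℕ) (s : ℝ) (u0 : Euc n → ℝ) (u : Euc n → ℝ → ℝ) : Prop :=
  ContinuousOn (fun p : Euc n × ℝ => u p.1 p.2) {p : Euc n × ℝ | 0 ≤ p.2}
    ∧ IsGFSolOn n s u (Set.Ioi 0)
    ∧ ∀ x, u x 0 = u0 x

/-- Positively 1-homogeneous function. -/
def PosHomOne (n : ℕ) (f : Euc n → ℝ) : Prop :=
  ∀ r : ℝ, 0 < r → ∀ x, f (r • x) = r * f x


/-! `φ(r, x) = r u₀(x/r)` has `∂ᵣ φ(r, x) = u₀(y) - Du₀(y)·y` at `y = x/r`, so the straightness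
hypothesis bounds `|∂ᵣ φ|` by `K (1+|x|)^(1-δ) r^(δ-1)` for `r ≤ 1`, which is integrable at `0`.
This gives (i), hence `φ(r, x)` is Cauchy as `r → 0⁺`, with limit `ū₀(x)` at distance at most
`(K/δ)(1+|x|)^(1-δ) r^δ` from `φ(r, x)`; taking `r = 1` gives (iii), and the locally bounded factor
makes the convergence locally uniform. Each `φ(r, ·)` is `L`-Lipschitz, and `φ(r, c x) = c φ(r/c, x)`,
so the limit is `L`-Lipschitz and positively `1`-homogeneous. -/

open Real

theorem exists_tendsto_nhdsGT_zero_of_dist_le {X : Type*} [PseudoMetricSpace X] [CompleteSpace X]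
    {f : ℝ → X} {ω : ℝ → ℝ} {T : ℝ} (hT : 0 < T) (hω : Tendsto ω (𝓝[>] 0) (𝓝 0))
    (hf : ∀ s t, 0 < s → s ≤ t → t ≤ T → dist (f s) (f t) ≤ ω t) :
    ∃ a, Tendsto f (𝓝[>] 0) (𝓝 a) ∧ ∀ t ∈ Ioc 0 T, dist (f t) a ≤ ω t := by
  have hdist : ∀ s t, 0 < s → 0 < t → s ≤ T → t ≤ T → dist (f s) (f t) ≤ max (ω s) (ω t) := by
    intro s t hs ht hsT htT
    rcases le_total s t with hst | hts
    · exact (hf s t hs hst htT).trans (le_max_right _ _)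
    · rw [dist_comm]; exact (hf t s ht hts hsT).trans (le_max_left _ _)
  have hcauchy : Cauchy (map f (𝓝[>] 0)) := by
    refine cauchy_map_iff'.2 (Metric.uniformity_basis_dist.tendsto_right_iff.2 fun ε hε => ?_)
    have hnear : ∀ᶠ s in 𝓝[>] (0 : ℝ), s ∈ Ioc 0 T ∧ ω s < ε :=
      Filter.Eventually.and (Ioc_mem_nhdsGT hT) (hω.eventually (gt_mem_nhds hε))
    filter_upwards [hnear.prod_mk hnear] with ⟨s, t⟩ ⟨⟨⟨hs, hsT⟩, hωs⟩, ⟨⟨ht, htT⟩, hωt⟩⟩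
    exact (hdist s t hs ht hsT htT).trans_lt (max_lt hωs hωt)
  obtain ⟨a, ha⟩ := cauchy_map_iff_exists_tendsto.1 hcauchy
  refine ⟨a, ha, fun t ⟨ht, htT⟩ => ?_⟩
  refine le_of_tendsto (tendsto_const_nhds.dist ha) ?_
  filter_upwards [Ioc_mem_nhdsGT ht] with s ⟨hs, hst⟩
  rw [dist_comm]
  exact hf s t hs hst htT

theorem tendstoLocallyUniformly_of_dist_le_mul {ι α X : Type*} [TopologicalSpace α]
    [PseudoMetricSpace X] {F : ι → α → X} {f : α → X} {l : Filter ι} {C : α → ℝ}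
    (hC : Continuous C) {ρ : ι → ℝ} (hρ : Tendsto ρ l (𝓝 0))
    (h : ∀ᶠ i in l, 0 ≤ ρ i ∧ ∀ x, dist (f x) (F i x) ≤ C x * ρ i) :
    TendstoLocallyUniformly F f l := by
  rw [Metric.tendstoLocallyUniformly_iff]
  intro ε hε x
  refine ⟨{y | C y < C x + 1}, hC.continuousAt.eventually_lt continuousAt_const (lt_add_one _), ?_⟩
  have hsmall : ∀ᶠ i in l, (C x + 1) * ρ i < ε := by
    have := hρ.const_mul (C x + 1)
    rw [mul_zero] at this
    exact this.eventually (gt_mem_nhds hε)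
  filter_upwards [h, hsmall] with i ⟨hρ0, hi⟩ hiε y hy
  calc dist (f y) (F i y) ≤ C y * ρ i := hi y
    _ ≤ (C x + 1) * ρ i := by gcongr
    _ < ε := hiε

section Rescale

variable {E : Type*} [NormedAddCommGroup E] [NormedSpace ℝ E]

theorem norm_sub_le_sub_of_norm_deriv_le {f f' : ℝ → E} {G G' : ℝ → ℝ} {a b : ℝ} (hab : a ≤ b)
    (hf : ∀ t ∈ Icc a b, HasDerivAt f (f' t) t) (hG : ∀ t ∈ Icc a b, HasDerivAt G (G' t) t)
    (bound : ∀ t ∈ Ico a b, ‖f' t‖ ≤ G' t) : ‖f b - f a‖ ≤ G b - G a :=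
  image_norm_le_of_norm_deriv_right_le_deriv_boundary' (f := fun t => f t - f a)
    (B := fun t => G t - G a)
    (fun t ht => ((hf t ht).sub_const (f a)).continuousAt.continuousWithinAt)
    (fun t ht => ((hf t (Ico_subset_Icc_self ht)).sub_const (f a)).hasDerivWithinAt) (by simp)
    (fun t ht => ((hG t ht).sub_const (G a)).continuousAt.continuousWithinAt)
    (fun t ht => ((hG t (Ico_subset_Icc_self ht)).sub_const (G a)).hasDerivWithinAt) bound
    ⟨hab, le_rfl⟩

def rescale (u : E → ℝ) (r : ℝ) (x : E) : ℝ :=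
  r * u (r⁻¹ • x)

theorem hasDerivAt_rescale {u : E → ℝ} {r : ℝ} {x : E} (hr : r ≠ 0)
    (hu : DifferentiableAt ℝ u (r⁻¹ • x)) :
    HasDerivAt (fun t => rescale u t x) (u (r⁻¹ • x) - fderiv ℝ u (r⁻¹ • x) (r⁻¹ • x)) r := by
  have hinv : HasDerivAt (fun t : ℝ => t⁻¹ • x) ((-(r ^ 2)⁻¹) • x) r :=
    (hasDerivAt_inv hr).smul_const x
  refine ((hasDerivAt_id' r).mul (hu.hasFDerivAt.comp_hasDerivAt r hinv)).congr_deriv ?_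
  rw [map_smul, map_smul, smul_eq_mul, smul_eq_mul, Function.comp_apply]
  field_simp
  ring

theorem lipschitzWith_rescale {u : E → ℝ} {L : ℝ≥0} (hu : LipschitzWith L u) {r : ℝ}
    (hr : 0 < r) : LipschitzWith L (rescale u r) := by
  refine LipschitzWith.of_dist_le_mul fun x y => ?_
  have h := hu.dist_le_mul (r⁻¹ • x) (r⁻¹ • y)
  rw [dist_smul₀, norm_inv, Real.norm_of_nonneg hr.le] at h
  calc dist (rescale u r x) (rescale u r y) = r * dist (u (r⁻¹ • x)) (u (r⁻¹ • y)) := by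
        rw [rescale, rescale, Real.dist_eq, Real.dist_eq, ← mul_sub, abs_mul, abs_of_pos hr]
    _ ≤ r * (L * (r⁻¹ * dist x y)) := by gcongr
    _ = L * dist x y := by field_simp

theorem rescale_smul (u : E → ℝ) {c : ℝ} (hc : c ≠ 0) (r : ℝ) (x : E) :
    rescale u r (c • x) = c * rescale u (r / c) x := by
  simp only [rescale, smul_smul]
  rw [show r⁻¹ * c = (r / c)⁻¹ by field_simp]
  field_simp

theorem one_add_norm_inv_smul_rpow_le {t p : ℝ} (ht : 0 < t) (ht1 : t ≤ 1) (hp : 0 ≤ p) (x : E) :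
    (1 + ‖t⁻¹ • x‖) ^ p ≤ t ^ (-p) * (1 + ‖x‖) ^ p := by
  have hle : 1 + ‖t⁻¹ • x‖ ≤ t⁻¹ * (1 + ‖x‖) := by
    rw [norm_smul, Real.norm_of_nonneg (inv_nonneg.2 ht.le), mul_add, mul_one]
    gcongr
    exact (one_le_inv₀ ht).2 ht1
  calc (1 + ‖t⁻¹ • x‖) ^ p ≤ (t⁻¹ * (1 + ‖x‖)) ^ p := by gcongr
    _ = t ^ (-p) * (1 + ‖x‖) ^ p := by
      rw [mul_rpow (inv_nonneg.2 ht.le) (by positivity), inv_rpow ht.le, rpow_neg ht.le]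

theorem abs_rescale_sub_rescale_le {u : E → ℝ} (hu : Differentiable ℝ u) {K δ : ℝ} (hK : 0 ≤ K)
    (hδ0 : 0 < δ) (hδ1 : δ ≤ 1)
    (hdefect : ∀ x, |u x - fderiv ℝ u x x| ≤ K * (1 + ‖x‖) ^ (1 - δ))
    ⦃r₁ r₂ : ℝ⦄ (hr₁ : 0 < r₁) (hr₁₂ : r₁ ≤ r₂) (hr₂ : r₂ ≤ 1) (x : E) :
    |rescale u r₂ x - rescale u r₁ x| ≤ K / δ * (1 + ‖x‖) ^ (1 - δ) * (r₂ ^ δ - r₁ ^ δ) := by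
  rw [mul_sub]
  refine norm_sub_le_sub_of_norm_deriv_le
    (G := fun t => K / δ * (1 + ‖x‖) ^ (1 - δ) * t ^ δ) hr₁₂
    (fun t ht => hasDerivAt_rescale (hr₁.trans_le ht.1).ne' (hu _))
    (fun t ht => (hasDerivAt_rpow_const (Or.inl (hr₁.trans_le ht.1).ne')).const_mul _)
    fun t ⟨ht₁, ht₂⟩ => ?_
  have ht : 0 < t := hr₁.trans_le ht₁
  calc ‖u (t⁻¹ • x) - fderiv ℝ u (t⁻¹ • x) (t⁻¹ • x)‖ ≤ K * (1 + ‖t⁻¹ • x‖) ^ (1 - δ) :=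
        hdefect _
    _ ≤ K * (t ^ (-(1 - δ)) * (1 + ‖x‖) ^ (1 - δ)) := by
        gcongr
        exact one_add_norm_inv_smul_rpow_le ht (ht₂.le.trans hr₂) (by linarith) x
    _ = K / δ * (1 + ‖x‖) ^ (1 - δ) * (δ * t ^ (δ - 1)) := by
        rw [neg_sub]
        field_simp

end Rescale

theorem posHomOne_of_tendsto_rescale {n : ℕ} {u ub : Euc n → ℝ}
    (h : ∀ x, Tendsto (fun r => rescale u r x) (𝓝[>] 0) (𝓝 (ub x))) : PosHomOne n ub := by
  intro c hc x
  have hdiv : Tendsto (fun r : ℝ => r / c) (𝓝[>] 0) (𝓝[>] 0) :=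
    tendsto_nhdsWithin_of_tendsto_nhds_of_eventually_within _
      (((continuous_id.div_const c).tendsto' 0 0 (zero_div c)).mono_left nhdsWithin_le_nhds)
      (eventually_mem_nhdsWithin.mono fun r hr => div_pos hr hc)
  exact tendsto_nhds_unique ((h (c • x)).congr fun r => rescale_smul u hc.ne' r x)
    (((h x).comp hdiv).const_mul c)

theorem straight_at_infinity_general (n : ℕ)
    (u0 : Euc n → ℝ) (L : ℝ≥0) (hLip : LipschitzWith L u0) (hC1 : ContDiff ℝ 1 u0)
    (K δ : ℝ) (hK : 0 < K) (hδ : δ ∈ Set.Ioo (0:ℝ) 1)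
    (hstraight : ∀ x : Euc n,
        |u0 x - ⟪gradient u0 x, x⟫| ≤ K * (1 + ‖x‖) ^ (1 - δ)) :
    (∀ r1 r2 : ℝ, 0 < r1 → r1 < r2 → r2 ≤ 1 → ∀ x : Euc n,
        |r2 * u0 (r2⁻¹ • x) - r1 * u0 (r1⁻¹ • x)|
          ≤ K / δ * (1 + ‖x‖) ^ (1 - δ) * (r2 ^ δ - r1 ^ δ))
    ∧ ∃ ub0 : Euc n → ℝ,
        (∃ L' : ℝ≥0, LipschitzWith L' ub0) ∧ PosHomOne n ub0
        ∧ TendstoLocallyUniformly (fun (r : ℝ) (x : Euc n) => r * u0 (r⁻¹ • x)) ub0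
            (nhdsWithin 0 (Set.Ioi 0))
        ∧ ∀ x : Euc n, |u0 x - ub0 x| ≤ K / δ * (1 + ‖x‖) ^ (1 - δ) := by
  obtain ⟨hδ0, hδ1⟩ := hδ
  set C : Euc n → ℝ := fun x => K / δ * (1 + ‖x‖) ^ (1 - δ)
  have hest := abs_rescale_sub_rescale_le (hC1.differentiable one_ne_zero) hK.le hδ0 hδ1.le
    (by simpa only [inner_gradient_left] using hstraight)
  have hrate : ∀ x s t, 0 < s → s ≤ t → t ≤ 1 →
      dist (rescale u0 s x) (rescale u0 t x) ≤ C x * t ^ δ := fun x s t hs hst ht => by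
    rw [dist_comm, Real.dist_eq]
    exact (hest hs hst ht x).trans
      (mul_le_mul_of_nonneg_left (sub_le_self _ (rpow_nonneg hs.le δ)) (by positivity))
  have hρ : Tendsto (fun r : ℝ => r ^ δ) (𝓝[>] 0) (𝓝 0) := by
    simpa [zero_rpow hδ0.ne'] using
      (continuousAt_rpow_const 0 δ (Or.inr hδ0.le)).tendsto.mono_left nhdsWithin_le_nhds
  choose ub0 hub0 hub0_rate using fun x =>
    exists_tendsto_nhdsGT_zero_of_dist_le one_pos (by simpa using hρ.const_mul (C x)) (hrate x)
  refine ⟨fun r1 r2 h1 h12 h2 x => hest h1 h12.le h2 x, ub0, ⟨L, ?_⟩,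
    posHomOne_of_tendsto_rescale hub0, ?_, fun x => ?_⟩
  · exact (isClosed_setOfPred_lipschitzWith L).mem_of_tendsto (tendsto_pi_nhds.2 hub0)
      (eventually_mem_nhdsWithin.mono fun r hr => lipschitzWith_rescale hLip hr)
  · refine tendstoLocallyUniformly_of_dist_le_mul (C := C)
      (continuous_const.mul ((continuous_const.add continuous_norm).rpow_const
        fun _ => Or.inr (by linarith))) hρ ?_
    filter_upwards [Ioc_mem_nhdsGT one_pos] with r hr
    exact ⟨rpow_nonneg hr.1.le δ, fun x => dist_comm (ub0 x) _ ▸ hub0_rate x r hr⟩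
  · simpa [rescale, Real.dist_eq, C] using hub0_rate x 1 ⟨one_pos, le_rfl⟩

/-- straight at infinity ⇒ blow-down cone: if `u₀ ∈ C¹` is Lipschitz and
`|u₀(x) - Du₀(x)·x| ≤ K(1+|x|)^{1-δ}`, then (i) the Cauchy-type estimate
`|r₂ u₀(x/r₂) - r₁ u₀(x/r₁)| ≤ (K/δ)(1+|x|)^{1-δ}(r₂^δ - r₁^δ)` holds for `0 < r₁ < r₂ ≤ 1`,
(ii) the blow-down `ū₀(x) = lim_{r→0⁺} r u₀(x/r)` exists locally uniformly and is Lipschitz and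
positively 1-homogeneous, and (iii) `|u₀(x) - ū₀(x)| ≤ (K/δ)(1+|x|)^{1-δ}`. -/
theorem straight_at_infinity (n : ℕ) (hn : 1 ≤ n)
    (u0 : Euc n → ℝ) (L : ℝ≥0) (hLip : LipschitzWith L u0) (hC1 : ContDiff ℝ 1 u0)
    (K δ : ℝ) (hK : 0 < K) (hδ : δ ∈ Set.Ioo (0:ℝ) 1)
    (hstraight : ∀ x : Euc n,
        |u0 x - ⟪gradient u0 x, x⟫| ≤ K * (1 + ‖x‖) ^ (1 - δ)) :
    (∀ r1 r2 : ℝ, 0 < r1 → r1 < r2 → r2 ≤ 1 → ∀ x : Euc n,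
        |r2 * u0 (r2⁻¹ • x) - r1 * u0 (r1⁻¹ • x)|
          ≤ K / δ * (1 + ‖x‖) ^ (1 - δ) * (r2 ^ δ - r1 ^ δ))
    ∧ ∃ ub0 : Euc n → ℝ,
        (∃ L' : ℝ≥0, LipschitzWith L' ub0) ∧ PosHomOne n ub0
        ∧ TendstoLocallyUniformly (fun (r : ℝ) (x : Euc n) => r * u0 (r⁻¹ • x)) ub0
            (nhdsWithin 0 (Set.Ioi 0))
        ∧ ∀ x : Euc n, |u0 x - ub0 x| ≤ K / δ * (1 + ‖x‖) ^ (1 - δ) :=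
  straight_at_infinity_general n u0 L hLip hC1 K δ hK hδ hstraight
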